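/- arXiv:0901.4687 — 11 statements merged into one kernel-verified Lean document; each statement's English description precedes it below -/
import Mathlib

section
/- Let A be a commutative semilocal ring (a ring with only finitely many maximal ideals), and let B ⊆ A be a subring that is a local ring whose maximal ideal 𝔪 is contained in the Jacobson radical of A, and suppose the residue field B/𝔪 is infinite. Let M be a finite free A-module and N ⊆ M a B-submodule such that the A-span of N equals M. Then N contains an A-module basis of M. -/
/-!
Work modulo each of the finitely many maximal ideals `m` of `A`: `M ⧸ m • ⊤` is an
`n`-dimensional vector space over `A ⧸ m`. Pick `v₁, …, vₙ ∈ N` one at a time so that their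
images stay linearly independent modulo every `m`. Given `k < n` of them, the elements of `N`
lying in `span A {vᵢ} ⊔ m • ⊤` form a proper `B`-submodule of `N` (as `N` spans `M`) containing
`𝔪 • N` (as `𝔪 ⊆ Jacobson A ⊆ m`), i.e. a proper subspace of `N ⧸ 𝔪 • N` over the infinite
field `B ⧸ 𝔪`; finitely many such subspaces cannot cover it. Once `n` vectors are chosen,
`span A {vᵢ} ⊔ m • ⊤ = ⊤` for every `m`, so `span A {vᵢ} = ⊤` by Nakayama, and a surjection
`Aⁿ → M ≅ Aⁿ` is injective.
-/

open Submodule IsLocalRing Set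

section
variable {A M : Type*} [CommRing A] [AddCommGroup M] [Module A M]

noncomputable def Module.Basis.quotientSMulTop {ι : Type*} (e : Module.Basis ι A M)
    (I : Ideal A) :
    Module.Basis ι (A ⧸ I) (M ⧸ I • (⊤ : Submodule A M)) :=
  (e.baseChange (A ⧸ I)).map
    ((TensorProduct.quotTensorEquivQuotSMul M I).extendScalarsOfSurjective
      Ideal.Quotient.mk_surjective)

theorem Submodule.mkQ_mem_span_image_iff (I : Ideal A) (s : Set M) (x : M) :
    (I • ⊤ : Submodule A M).mkQ x ∈ span (A ⧸ I) ((I • ⊤ : Submodule A M).mkQ '' s) ↔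
      x ∈ span A s ⊔ I • ⊤ := by
  rw [← restrictScalars_mem A, restrictScalars_span A _ Ideal.Quotient.mk_surjective,
    ← map_span, ← mem_comap, comap_map_mkQ, sup_comm]

theorem Submodule.span_mkQ_image_eq_top_iff (I : Ideal A) (s : Set M) :
    span (A ⧸ I) ((I • ⊤ : Submodule A M).mkQ '' s) = ⊤ ↔ span A s ⊔ I • ⊤ = ⊤ := by
  rw [← restrictScalars_eq_top_iff A, restrictScalars_span A _ Ideal.Quotient.mk_surjective,
    ← map_span, Submodule.map_mkQ_eq_top, sup_comm]

theorem Module.subsingleton_of_forall_isMaximal_smul_top_eq_top [Module.Finite A M]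
    (h : ∀ m : Ideal A, m.IsMaximal → m • (⊤ : Submodule A M) = ⊤) : Subsingleton M := by
  by_contra hM
  obtain ⟨m, hm, hann⟩ :=
    Ideal.exists_le_maximal _ (mt (Module.annihilator_eq_top_iff (R := A)).mp hM)
  obtain ⟨r, hr1, hr0⟩ := exists_sub_one_mem_and_smul_eq_zero_of_fg_of_le_smul m ⊤
    Module.Finite.fg_top (h m hm).ge
  have hr : r ∈ m := hann (Module.mem_annihilator.mpr fun x => hr0 x trivial)
  exact hm.ne_top ((Ideal.eq_top_iff_one _).mpr (by simpa using m.sub_mem hr hr1))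

theorem Submodule.eq_top_of_forall_isMaximal_sup_smul_eq_top [Module.Finite A M]
    (P : Submodule A M) (h : ∀ m : Ideal A, m.IsMaximal → P ⊔ m • ⊤ = ⊤) : P = ⊤ := by
  rw [← Quotient.subsingleton_iff]
  refine Module.subsingleton_of_forall_isMaximal_smul_top_eq_top (A := A) fun m hm => ?_
  have := (Submodule.map_mkQ_eq_top P _).mpr (h m hm)
  rwa [map_smul'', map_top, range_mkQ] at this

theorem Module.Basis.linearIndependent_of_span_eq_top {ι : Type*} [Module.Finite A M]
    (e : Module.Basis ι A M) {v : ι → M} (hv : span A (range v) = ⊤) : LinearIndependent A v :=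
  OrzechProperty.injective_of_surjective_of_injective e.repr.symm.toLinearMap _
    e.repr.symm.injective
    (LinearMap.range_eq_top.mp (by rw [Finsupp.range_linearCombination, hv]))

namespace Module.Basis

variable {ι : Type*} [Fintype ι] (m : Ideal A) [m.IsMaximal]

theorem span_sup_smul_ne_top_of_card_lt (e : Module.Basis ι A M) {κ : Type*} [Fintype κ]
    (hκ : Fintype.card κ < Fintype.card ι) (v : κ → M) : span A (range v) ⊔ m • ⊤ ≠ ⊤ := by
  let := Ideal.Quotient.field m
  rw [Ne, ← span_mkQ_image_eq_top_iff, ← range_comp]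
  intro htop
  have := finrank_le_of_span_eq_top htop
  rw [finrank_eq_card_basis (e.quotientSMulTop m)] at this
  omega

theorem span_sup_smul_eq_top_of_linearIndependent (e : Module.Basis ι A M) {v : ι → M}
    (hv : LinearIndependent (A ⧸ m) ((m • ⊤ : Submodule A M).mkQ ∘ v)) :
    span A (range v) ⊔ m • ⊤ = ⊤ := by
  let := Ideal.Quotient.field m
  have := Module.Finite.of_basis (e.quotientSMulTop m)
  rw [← span_mkQ_image_eq_top_iff, ← range_comp]
  exact hv.span_eq_top_of_card_eq_finrank' (finrank_eq_card_basis (e.quotientSMulTop m)).symm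

end Module.Basis

end

theorem IsLocalRing.exists_forall_notMem_of_maximalIdeal_smul_le {ι B N : Type*} [Finite ι]
    [CommRing B] [IsLocalRing B] [Infinite (ResidueField B)] [AddCommGroup N] [Module B N]
    (T : ι → Submodule B N) (hle : ∀ i, maximalIdeal B • ⊤ ≤ T i) (hne : ∀ i, T i ≠ ⊤) :
    ∃ x, ∀ i, x ∉ T i := by
  set 𝔪 := maximalIdeal B
  let : Field (B ⧸ 𝔪) := Ideal.Quotient.field 𝔪
  have : Infinite (B ⧸ 𝔪) := ‹Infinite (ResidueField B)›
  let U i := span (B ⧸ 𝔪) ((𝔪 • ⊤ : Submodule B N).mkQ '' T i)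
  have hU : ∀ i, (U i).restrictScalars B = (T i).map (𝔪 • ⊤ : Submodule B N).mkQ := fun i => by
    rw [restrictScalars_span B _ Ideal.Quotient.mk_surjective, ← map_coe, span_eq]
  have hUne : ∀ i, U i ≠ ⊤ := fun i hUi => hne i <| by
    rw [← sup_eq_right.mpr (hle i), ← Submodule.map_mkQ_eq_top, ← hU, hUi, restrictScalars_top]
  obtain ⟨x, hx⟩ := Submodule.exists_forall_notMem_of_forall_ne_top U hUne
  obtain ⟨x, rfl⟩ := Submodule.Quotient.mk_surjective _ x
  exact ⟨x, fun i hxi => hx i (subset_span ⟨x, hxi, rfl⟩)⟩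

theorem Submodule.exists_mem_forall_notMem_of_span_eq_top {ι A B M : Type*} [Finite ι]
    [CommRing A] [CommRing B] [IsLocalRing B] [Infinite (ResidueField B)] [Algebra B A]
    [AddCommGroup M] [Module A M] [Module B M] [IsScalarTower B A M]
    (hB : ∀ b ∈ maximalIdeal B, algebraMap B A b ∈ (⊥ : Ideal A).jacobson)
    {N : Submodule B M} (hN : span A (N : Set M) = ⊤) (P : ι → Submodule A M)
    (hle : ∀ i, (⊥ : Ideal A).jacobson • ⊤ ≤ P i) (hne : ∀ i, P i ≠ ⊤) :
    ∃ x ∈ N, ∀ i, x ∉ P i := by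
  let T i := ((P i).restrictScalars B).comap N.subtype
  have hTle : ∀ i, maximalIdeal B • ⊤ ≤ T i := fun i => smul_le.mpr fun b hb y _ => by
    change ((b • y : N) : M) ∈ P i
    rw [N.coe_smul, ← algebraMap_smul A]
    exact hle i (smul_mem_smul (hB b hb) mem_top)
  have hTne : ∀ i, T i ≠ ⊤ := fun i hi =>
    hne i (eq_top_iff.mpr (hN ▸ span_le.mpr fun x hx => (hi ▸ mem_top : (⟨x, hx⟩ : N) ∈ T i)))
  obtain ⟨x, hx⟩ := exists_forall_notMem_of_maximalIdeal_smul_le T hTle hTne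
  exact ⟨x, x.2, hx⟩

section
variable {A B M : Type*} [CommRing A] [CommRing B] [IsLocalRing B] [Infinite (ResidueField B)]
    [Algebra B A] [AddCommGroup M] [Module A M] [Module B M] [IsScalarTower B A M]

theorem exists_fin_mem_linearIndependent_mod_isMaximal
    (hsemilocal : {m : Ideal A | m.IsMaximal}.Finite)
    (hB : ∀ b ∈ maximalIdeal B, algebraMap B A b ∈ (⊥ : Ideal A).jacobson)
    {N : Submodule B M} (hN : span A (N : Set M) = ⊤)
    {ι : Type*} [Fintype ι] (e : Module.Basis ι A M) {k : ℕ} (hk : k ≤ Fintype.card ι) :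
    ∃ v : Fin k → M, (∀ i, v i ∈ N) ∧
      ∀ m : Ideal A, m.IsMaximal →
        LinearIndependent (A ⧸ m) ((m • ⊤ : Submodule A M).mkQ ∘ v) := by
  induction k with
  | zero => exact ⟨Fin.elim0, Fin.rec0, fun _ _ => linearIndependent_empty_type⟩
  | succ k ih =>
    obtain ⟨v, hvN, hv⟩ := ih (by omega)
    have := hsemilocal.to_subtype
    obtain ⟨x, hxN, hx⟩ := exists_mem_forall_notMem_of_span_eq_top hB hN
      (fun m : {m : Ideal A | m.IsMaximal} => span A (range v) ⊔ m.1 • ⊤)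
      (fun m => (smul_mono_left (sInf_le ⟨bot_le, m.2⟩ : (⊥ : Ideal A).jacobson ≤ m.1)).trans
        le_sup_right)
      (fun m => have : m.1.IsMaximal := m.2
        e.span_sup_smul_ne_top_of_card_lt m.1 (by simpa using hk) v)
    refine ⟨Fin.snoc v x, Fin.lastCases (by simpa using hxN) (fun i => by simpa using hvN i),
      fun m hm => ?_⟩
    let := Ideal.Quotient.field m
    rw [Fin.comp_snoc, linearIndependent_finSnoc, range_comp, mkQ_mem_span_image_iff]
    exact ⟨hv m hm, hx ⟨m, hm⟩⟩

end

/-- Let `A` be a commutative semilocal ring (only finitely many maximal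
ideals), `B ⊆ A` a subring which is a local ring whose maximal ideal is contained in the
Jacobson radical of `A` and whose residue field is infinite.  Let `M` be a finite free
`A`-module and `N ⊆ M` a `B`-submodule whose `A`-span is all of `M`.  Then `N` contains
an `A`-module basis of `M`. -/
theorem submodule_spanning_contains_basis
    {A M : Type*} [CommRing A] [AddCommGroup M] [Module A M]
    (hsemilocal : {I : Ideal A | I.IsMaximal}.Finite)
    (B : Subring A) [IsLocalRing B]
    (hm : ∀ x : B, x ∈ IsLocalRing.maximalIdeal B →
      (x : A) ∈ Ideal.jacobson (⊥ : Ideal A))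
    (hres : Infinite (IsLocalRing.ResidueField B))
    {n : ℕ} (e : Module.Basis (Fin n) A M)
    (N : Submodule B M) (hN : Submodule.span A (N : Set M) = ⊤) :
    ∃ b : Module.Basis (Fin n) A M, ∀ i, b i ∈ N := by
  obtain ⟨v, hvN, hv⟩ := exists_fin_mem_linearIndependent_mod_isMaximal hsemilocal hm hN e
    (Fintype.card_fin n).ge
  have := Module.Finite.of_basis e
  have hspan : span A (range v) = ⊤ := eq_top_of_forall_isMaximal_sup_smul_eq_top _
    fun m hm => e.span_sup_smul_eq_top_of_linearIndependent m (hv m hm)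
  exact ⟨.mk (e.linearIndependent_of_span_eq_top hspan) hspan.ge, fun i => by simpa using hvN i⟩
end

section
/- Let A be a commutative ring and u : M → N a homomorphism of A-modules with N finitely generated. Then u is surjective if and only if for every maximal ideal 𝔪 of A the induced homomorphism M/𝔪M → N/𝔪N is surjective. -/
/-!
Passing to `Q := N ⧸ range u`, surjectivity of `M ⧸ 𝔪M → N ⧸ 𝔪N` says exactly that `𝔪Q = Q`.
By Nakayama's lemma for the finitely generated module `Q`, this forces `𝔪 + Ann Q = A`; as this
holds for every maximal ideal `𝔪`, the annihilator of `Q` is the unit ideal, i.e. `Q = 0`.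
-/

namespace Submodule

variable {A M N : Type*} [CommRing A] [AddCommGroup M] [Module A M] [AddCommGroup N] [Module A N]

theorem mapQ_surjective_iff {p : Submodule A M} {q : Submodule A N} (f : M →ₗ[A] N)
    (h : p ≤ q.comap f) : Function.Surjective (p.mapQ q f h) ↔ LinearMap.range f ⊔ q = ⊤ := by
  rw [← LinearMap.range_eq_top, range_mapQ, map_mkQ_eq_top, sup_comm]

theorem smul_top_quotient_eq_top_iff (P : Submodule A N) (I : Ideal A) :
    (I • ⊤ : Submodule A (N ⧸ P)) = ⊤ ↔ P ⊔ I • ⊤ = ⊤ := by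
  rw [← map_mkQ_eq_top, map_smul'', map_top, range_mkQ]

end Submodule

namespace Module

variable {A Q : Type*} [CommRing A] [AddCommGroup Q] [Module A Q] [Module.Finite A Q]

theorem sup_annihilator_eq_top_of_smul_top_eq_top {I : Ideal A}
    (h : I • (⊤ : Submodule A Q) = ⊤) : I ⊔ annihilator A Q = ⊤ := by
  obtain ⟨r, hr1, hr0⟩ := Submodule.exists_sub_one_mem_and_smul_eq_zero_of_fg_of_le_smul I ⊤
    Module.Finite.fg_top h.ge
  have hr : r ∈ annihilator A Q := mem_annihilator.mpr fun q => hr0 q Submodule.mem_top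
  rw [Ideal.eq_top_iff_one]
  simpa using Submodule.sub_mem _ (Submodule.mem_sup_right hr) (Submodule.mem_sup_left hr1)

theorem subsingleton_of_forall_isMaximal_smul_top_eq_top_s3
    (h : ∀ 𝔪 : Ideal A, 𝔪.IsMaximal → 𝔪 • (⊤ : Submodule A Q) = ⊤) : Subsingleton Q := by
  rw [← annihilator_eq_top_iff (R := A)]
  by_contra hann
  obtain ⟨𝔪, h𝔪, hle⟩ := Ideal.exists_le_maximal _ hann
  exact h𝔪.ne_top (by simpa [sup_eq_left.mpr hle] using
    sup_annihilator_eq_top_of_smul_top_eq_top (h 𝔪 h𝔪))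

end Module

/-- Let `A` be a commutative ring and `u : M → N` a homomorphism of
`A`-modules with `N` finitely generated.  Then `u` is surjective iff for every maximal
ideal `𝔪` of `A` the induced homomorphism `M ⧸ 𝔪M → N ⧸ 𝔪N` is surjective. -/
theorem surjective_iff_surjective_mod_maximal
    {A M N : Type*} [CommRing A] [AddCommGroup M] [Module A M]
    [AddCommGroup N] [Module A N] [Module.Finite A N] (u : M →ₗ[A] N) :
    Function.Surjective u ↔
      ∀ 𝔪 : Ideal A, 𝔪.IsMaximal →
        Function.Surjective
          (Submodule.mapQ (𝔪 • ⊤ : Submodule A M) (𝔪 • ⊤ : Submodule A N) u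
            (by
              rw [Submodule.smul_le]
              intro r hr x _
              rw [Submodule.mem_comap, map_smul]
              exact Submodule.smul_mem_smul hr Submodule.mem_top)) := by
  simp_rw [Submodule.mapQ_surjective_iff, ← Submodule.smul_top_quotient_eq_top_iff]
  constructor
  · intro hu 𝔪 _
    rw [LinearMap.range_eq_top.mpr hu]
    exact Subsingleton.elim _ _
  · intro h
    have : Subsingleton (N ⧸ LinearMap.range u) :=
      Module.subsingleton_of_forall_isMaximal_smul_top_eq_top_s3 h
    rwa [Submodule.Quotient.subsingleton_iff, LinearMap.range_eq_top] at this
end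

section
/- Let A be a commutative superalgebra. Then the two-sided ideal of A generated by the odd part 𝒜 1 is a nil ideal: every element of the ideal A·𝒜 1·A is nilpotent. -/
/-!
Even elements are central and odd elements square to zero. A product `u * v` of two odd
elements is even, and it squares to zero because `v * u = -(u * v)`:
`(u * v) * (u * v) = -(u * u) * (v * v) = 0`. The ideal is additively generated by the
`a * y * b` with `y` odd; splitting `a` and `b` into homogeneous parts, each of these is a sum of
odd elements and of such central nilpotent products. So every element of the ideal is `c + y`
with `c` central nilpotent and `y` odd, a sum of two commuting nilpotents.
-/

section CentralNilpotents

variable (R : Type*) [Ring R]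

def centralNilpotents : AddSubgroup R where
  carrier := {c | c ∈ Subring.center R ∧ IsNilpotent c}
  zero_mem' := ⟨zero_mem _, IsNilpotent.zero⟩
  add_mem' := fun {a _} ⟨ha, hna⟩ ⟨hb, hnb⟩ =>
    ⟨add_mem ha hb, Commute.isNilpotent_add (Subring.mem_center_iff.1 hb a) hna hnb⟩
  neg_mem' := fun ⟨ha, hna⟩ => ⟨neg_mem ha, hna.neg⟩

variable {R}

theorem isNilpotent_of_mem_centralNilpotents_sup {B : AddSubgroup R}
    (hB : ∀ b ∈ B, IsNilpotent b) {x : R} (hx : x ∈ centralNilpotents R ⊔ B) :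
    IsNilpotent x := by
  obtain ⟨c, ⟨hc, hnc⟩, b, hb, rfl⟩ := AddSubgroup.mem_sup.1 hx
  exact Commute.isNilpotent_add (Subring.mem_center_iff.1 hc b).symm hnc (hB b hb)

theorem mul_mul_self_eq_zero_of_anticomm {u v : R} (huv : v * u = -(u * v)) (hu : u * u = 0) :
    u * v * (u * v) = 0 := by
  calc u * v * (u * v) = u * (v * u) * v := by noncomm_ring
    _ = -(u * u * (v * v)) := by rw [huv]; noncomm_ring
    _ = 0 := by rw [hu, zero_mul, neg_zero]

end CentralNilpotents

section Supercommutative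

variable {A : Type*} [Ring A] {𝒜 : ZMod 2 → AddSubgroup A}

theorem mem_center_of_mem_zero [GradedRing 𝒜]
    (hsuper : ∀ (i j : ZMod 2), ∀ a ∈ 𝒜 i, ∀ b ∈ 𝒜 j,
      a * b = ((-1 : ℤ) ^ ((i * j).val)) • (b * a))
    {c : A} (hc : c ∈ 𝒜 0) : c ∈ Subring.center A := by
  refine Subring.mem_center_iff.2 fun b => ?_
  induction b using DirectSum.Decomposition.inductionOn 𝒜 with
  | zero => rw [zero_mul, mul_zero]
  | @homogeneous j b => simpa using (hsuper 0 j c hc b b.2).symm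
  | add b b' hb hb' => rw [mul_add, add_mul, hb, hb']

theorem mul_eq_neg_mul_of_mem_one
    (hsuper : ∀ (i j : ZMod 2), ∀ a ∈ 𝒜 i, ∀ b ∈ 𝒜 j,
      a * b = ((-1 : ℤ) ^ ((i * j).val)) • (b * a))
    {u v : A} (hu : u ∈ 𝒜 1) (hv : v ∈ 𝒜 1) : v * u = -(u * v) := by
  simpa [show (1 : ZMod 2).val = 1 from rfl] using hsuper 1 1 v hv u hu

theorem mul_mem_centralNilpotents_of_mem_one [GradedRing 𝒜]
    (hsuper : ∀ (i j : ZMod 2), ∀ a ∈ 𝒜 i, ∀ b ∈ 𝒜 j,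
      a * b = ((-1 : ℤ) ^ ((i * j).val)) • (b * a))
    (hodd : ∀ a ∈ 𝒜 1, a * a = 0) {u v : A} (hu : u ∈ 𝒜 1) (hv : v ∈ 𝒜 1) :
    u * v ∈ centralNilpotents A :=
  ⟨mem_center_of_mem_zero hsuper (SetLike.mul_mem_graded hu hv),
    ⟨2, by rw [sq, mul_mul_self_eq_zero_of_anticomm
      (mul_eq_neg_mul_of_mem_one hsuper hu hv) (hodd u hu)]⟩⟩

theorem mul_mul_mem_sup_of_mem_graded [GradedRing 𝒜]
    (hsuper : ∀ (i j : ZMod 2), ∀ a ∈ 𝒜 i, ∀ b ∈ 𝒜 j,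
      a * b = ((-1 : ℤ) ^ ((i * j).val)) • (b * a))
    (hodd : ∀ a ∈ 𝒜 1, a * a = 0) {i j : ZMod 2} {a y b : A}
    (ha : a ∈ 𝒜 i) (hy : y ∈ 𝒜 1) (hb : b ∈ 𝒜 j) :
    a * y * b ∈ centralNilpotents A ⊔ 𝒜 1 := by
  have zero_or_one : ∀ k : ZMod 2, k = 0 ∨ k = 1 := by decide
  obtain rfl | rfl := zero_or_one i <;> obtain rfl | rfl := zero_or_one j
  · exact AddSubgroup.mem_sup_right (SetLike.mul_mem_graded (SetLike.mul_mem_graded ha hy) hb)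
  · exact AddSubgroup.mem_sup_left
      (mul_mem_centralNilpotents_of_mem_one hsuper hodd (SetLike.mul_mem_graded ha hy) hb)
  · rw [mul_assoc]
    exact AddSubgroup.mem_sup_left
      (mul_mem_centralNilpotents_of_mem_one hsuper hodd ha (SetLike.mul_mem_graded hy hb))
  · exact AddSubgroup.mem_sup_right (SetLike.mul_mem_graded (SetLike.mul_mem_graded ha hy) hb)

theorem mul_mul_mem_sup [GradedRing 𝒜]
    (hsuper : ∀ (i j : ZMod 2), ∀ a ∈ 𝒜 i, ∀ b ∈ 𝒜 j,
      a * b = ((-1 : ℤ) ^ ((i * j).val)) • (b * a))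
    (hodd : ∀ a ∈ 𝒜 1, a * a = 0) (a b : A) {y : A} (hy : y ∈ 𝒜 1) :
    a * y * b ∈ centralNilpotents A ⊔ 𝒜 1 := by
  induction a using DirectSum.Decomposition.inductionOn 𝒜 with
  | zero => rw [zero_mul, zero_mul]; exact zero_mem _
  | homogeneous a =>
    induction b using DirectSum.Decomposition.inductionOn 𝒜 with
    | zero => rw [mul_zero]; exact zero_mem _
    | homogeneous b => exact mul_mul_mem_sup_of_mem_graded hsuper hodd a.2 hy b.2
    | add b b' hb hb' => rw [mul_add]; exact add_mem hb hb'
  | add a a' ha ha' => rw [add_mul, add_mul]; exact add_mem ha ha'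

end Supercommutative

/-- Let `A` be a commutative superalgebra, i.e. a `ZMod 2`-graded ring
which is supercommutative (`a * b = (-1)^(i*j) • (b * a)` for homogeneous elements, and
odd elements square to zero).  Then the two-sided ideal of `A` generated by the odd part
`𝒜 1` is a nil ideal: every element of it is nilpotent. -/
theorem twoSidedIdeal_span_odd_part_isNil
    {A : Type*} [Ring A] (𝒜 : ZMod 2 → AddSubgroup A) [GradedRing 𝒜]
    (hsuper : ∀ (i j : ZMod 2), ∀ a ∈ 𝒜 i, ∀ b ∈ 𝒜 j,
      a * b = ((-1 : ℤ) ^ ((i * j).val)) • (b * a))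
    (hodd : ∀ a ∈ 𝒜 1, a * a = 0) :
    ∀ x ∈ TwoSidedIdeal.span ((𝒜 1 : AddSubgroup A) : Set A), IsNilpotent x := by
  intro x hx
  refine isNilpotent_of_mem_centralNilpotents_sup (fun y hy => ⟨2, by rw [sq]; exact hodd y hy⟩) ?_
  refine (AddSubgroup.closure_le _).2 ?_ (TwoSidedIdeal.mem_span_iff_mem_addSubgroup_closure.1 hx)
  rintro _ ⟨_, ⟨a, -, y, hy, rfl⟩, b, -, rfl⟩
  exact mul_mul_mem_sup hsuper hodd a b hy
end

section
/- Let A be a commutative superalgebra. Then every maximal left ideal 𝔐 of A is a two-sided ideal, contains the whole odd part 𝒜 1, and satisfies 𝔐 = (𝔐 ∩ 𝒜 0) ⊕ 𝒜 1, where 𝔐 ∩ 𝒜 0 is a maximal ideal of the commutative ring 𝒜 0. -/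
/-!
An odd `a` with `a * a = 0` satisfies `a * c * a = 0` for all `c`: moving `a` past each homogeneous
component of `c` only costs a sign. Hence every `c * a` squares to zero, so `1 - c * a` is a unit
and `a` lies in every maximal left ideal `𝔐`. A left ideal containing the odd part is homogeneous,
and homogeneous left ideals of a supercommutative ring are two-sided because `x * b = ± b * x`
for homogeneous `x`, `b`. Finally, if `x ∈ 𝒜 0 \ 𝔐`, write `c * x + m = 1` with `m ∈ 𝔐`; the
degree-zero components give `c₀ * x + m₀ = 1` inside `𝒜 0`.
-/

open DirectSum SetLike

theorem Ideal.IsMaximal.mem_of_forall_mul_mul_eq_zero {A : Type*} [Ring A] {I : Ideal A}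
    (hI : I.IsMaximal) {a : A} (ha : ∀ c, a * c * a = 0) : a ∈ I := by
  by_contra h
  obtain ⟨c, m, hm, hcm⟩ := hI.exists_inv h
  have hunit : (1 + c * a) * m = 1 := by
    calc (1 + c * a) * m = (1 + c * a) * (1 - c * a) := by rw [← hcm, add_sub_cancel_left]
      _ = 1 - c * (a * c * a) := by noncomm_ring
      _ = 1 := by rw [ha, mul_zero, sub_zero]
  exact hI.ne_top <| (I.eq_top_iff_one).2 <| hunit ▸ I.mul_mem_left _ hm

theorem DirectSum.decompose_zero_add_decompose_one {M σ : Type*} [AddCommMonoid M] [SetLike σ M]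
    [AddSubmonoidClass σ M] (ℳ : ZMod 2 → σ) [Decomposition ℳ] (x : M) :
    (decompose ℳ x 0 : M) + decompose ℳ x 1 = x := by
  classical
  conv_rhs => rw [← sum_support_decompose ℳ x]
  rw [Finset.sum_subset (Finset.subset_univ _) fun i _ hi => by
    rw [DFinsupp.notMem_support_iff.mp hi, ZeroMemClass.coe_zero]]
  exact (Fin.sum_univ_two fun i : Fin 2 => (decompose ℳ x i : M)).symm

theorem Ideal.IsMaximal.comap_gradeZero_subtype {ι σ A : Type*} [Ring A] [DecidableEq ι]
    [AddMonoid ι] [SetLike σ A] [AddSubgroupClass σ A] {𝒜 : ι → σ} [GradedRing 𝒜]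
    {I : Ideal A} (hI : I.IsMaximal) (hh : I.IsHomogeneous 𝒜) :
    (I.comap (GradeZero.subring 𝒜).subtype).IsMaximal := by
  refine Ideal.isMaximal_iff.2 ⟨fun h => hI.ne_top <| (I.eq_top_iff_one).2 h, ?_⟩
  intro J x hle hx hxJ
  obtain ⟨c, m, hm, hcm⟩ := hI.exists_inv (x := (x : A)) hx
  have hcm₀ : (decompose 𝒜 c 0 : A) * x + decompose 𝒜 m 0 = 1 := by
    rw [← coe_decompose_mul_of_right_mem_zero 𝒜 x.2, ← AddMemClass.coe_add,
      ← DirectSum.add_apply, ← decompose_add, hcm, decompose_of_mem_same 𝒜 (one_mem_graded 𝒜)]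
  have hone : (⟨_, (decompose 𝒜 c 0).2⟩ : GradeZero.subring 𝒜) * x
      + ⟨_, (decompose 𝒜 m 0).2⟩ = 1 := Subtype.ext hcm₀
  exact hone ▸ J.add_mem (J.mul_mem_left _ hxJ) (hle (hh 0 hm))

def IsSupercommutative {A : Type*} [Ring A] (𝒜 : ZMod 2 → AddSubgroup A) : Prop :=
  ∀ i j : ZMod 2, ∀ a ∈ 𝒜 i, ∀ b ∈ 𝒜 j, a * b = ((-1 : ℤ) ^ ((i * j).val)) • (b * a)

section Superalgebra

variable {A : Type*} [Ring A] {𝒜 : ZMod 2 → AddSubgroup A} [GradedRing 𝒜]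

theorem IsSupercommutative.mul_mul_eq_zero_of_mul_self_eq_zero (h𝒜 : IsSupercommutative 𝒜)
    {i : ZMod 2} {a : A} (ha : a ∈ 𝒜 i) (haa : a * a = 0) (c : A) : a * c * a = 0 := by
  induction c using Decomposition.inductionOn 𝒜 with
  | zero => rw [mul_zero, zero_mul]
  | @homogeneous j b => rw [h𝒜 i j a ha b b.2, smul_mul_assoc, mul_assoc, haa, mul_zero, smul_zero]
  | add b b' hb hb' => rw [mul_add, add_mul, hb, hb', add_zero]

theorem IsSupercommutative.mul_mem_of_mem_homogeneous (h𝒜 : IsSupercommutative 𝒜)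
    {I : Ideal A} {i : ZMod 2} {x : A} (hx : x ∈ 𝒜 i) (hxI : x ∈ I) (a : A) : x * a ∈ I := by
  induction a using Decomposition.inductionOn 𝒜 with
  | zero => rw [mul_zero]; exact I.zero_mem
  | @homogeneous j b => rw [h𝒜 i j x hx b b.2]; exact zsmul_mem (I.mul_mem_left _ hxI) _
  | add b b' hb hb' => rw [mul_add]; exact I.add_mem hb hb'

theorem IsSupercommutative.mul_mem_of_isHomogeneous (h𝒜 : IsSupercommutative 𝒜)
    {I : Ideal A} (hI : I.IsHomogeneous 𝒜) {x : A} (hx : x ∈ I) (a : A) : x * a ∈ I := by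
  rw [← decompose_zero_add_decompose_one 𝒜 x, add_mul]
  exact I.add_mem (h𝒜.mul_mem_of_mem_homogeneous (coe_mem _) (hI 0 hx) a)
    (h𝒜.mul_mem_of_mem_homogeneous (coe_mem _) (hI 1 hx) a)

theorem Ideal.isHomogeneous_of_forall_odd_mem {I : Ideal A} (h : ∀ a ∈ 𝒜 1, a ∈ I) :
    I.IsHomogeneous 𝒜 := by
  intro i x hx
  obtain rfl | rfl : i = 0 ∨ i = 1 := by revert i; decide
  · rw [← add_sub_cancel_right (decompose 𝒜 x 0 : A) (decompose 𝒜 x 1),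
      decompose_zero_add_decompose_one]
    exact I.sub_mem hx (h _ (coe_mem _))
  · exact h _ (coe_mem _)

end Superalgebra

/-- Let `A` be a commutative superalgebra (a supercommutative
`ZMod 2`-graded ring).  Every maximal left ideal `𝔐` of `A` (a coatom among left ideals,
i.e. submodules of `A` over itself) is a two-sided ideal, contains the whole odd part
`𝒜 1`, satisfies `𝔐 = (𝔐 ∩ 𝒜 0) ⊕ 𝒜 1`, and `𝔐 ∩ 𝒜 0` is a maximal ideal of the
commutative ring `𝒜 0`. -/
theorem maximal_left_ideal_of_superalgebra
    {A : Type*} [Ring A] (𝒜 : ZMod 2 → AddSubgroup A) [GradedRing 𝒜]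
    (hsuper : ∀ (i j : ZMod 2), ∀ a ∈ 𝒜 i, ∀ b ∈ 𝒜 j,
      a * b = ((-1 : ℤ) ^ ((i * j).val)) • (b * a))
    (hodd : ∀ a ∈ 𝒜 1, a * a = 0)
    (𝔐 : Submodule A A) (hmax : IsCoatom 𝔐) :
    (∀ x ∈ 𝔐, ∀ a : A, x * a ∈ 𝔐) ∧
    (∀ a ∈ 𝒜 1, a ∈ 𝔐) ∧
    (∀ x : A, x ∈ 𝔐 ↔ ∃ y ∈ 𝒜 0, y ∈ 𝔐 ∧ ∃ z ∈ 𝒜 1, x = y + z) ∧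
    (Ideal.IsMaximal
      ({ carrier := {x | (x : A) ∈ 𝔐}
         add_mem' := fun hx hy => 𝔐.add_mem hx hy
         zero_mem' := 𝔐.zero_mem
         smul_mem' := fun c x hx => by
           show ((c * x : ↥(SetLike.GradeZero.subring 𝒜)) : A) ∈ 𝔐
           rw [Subring.coe_mul]
           exact 𝔐.smul_mem (c : A) hx } :
        Ideal (SetLike.GradeZero.subring 𝒜))) := by
  have hM : Ideal.IsMaximal 𝔐 := ⟨hmax⟩
  have hoddM : ∀ a ∈ 𝒜 1, a ∈ 𝔐 := fun a ha => hM.mem_of_forall_mul_mul_eq_zero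
    (IsSupercommutative.mul_mul_eq_zero_of_mul_self_eq_zero hsuper ha (hodd a ha))
  have hhom : 𝔐.IsHomogeneous 𝒜 := Ideal.isHomogeneous_of_forall_odd_mem hoddM
  refine ⟨fun x hx => IsSupercommutative.mul_mem_of_isHomogeneous hsuper hhom hx, hoddM,
    fun x => ⟨fun hx => ?_, ?_⟩, hM.comap_gradeZero_subtype hhom⟩
  · exact ⟨_, coe_mem _, hhom 0 hx, _, coe_mem _, (decompose_zero_add_decompose_one 𝒜 x).symm⟩
  · rintro ⟨y, -, hy, z, hz, rfl⟩
    exact 𝔐.add_mem hy (hoddM z hz)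
end

section
/- Let K be a field, let A be a commutative superalgebra that is also a K-algebra finitely generated as a K-algebra, and let B ⊆ A be a graded K-subalgebra (B = (B ∩ 𝒜 0) ⊕ (B ∩ 𝒜 1)). If every even element of A is integral over the commutative ring B₀ = B ∩ 𝒜 0, then A is finitely generated as a B-module and B is finitely generated as a K-algebra. -/
/-!
Even elements commute with all homogeneous elements, hence with everything, so the even part
`A₀` is a commutative ring, and `A` is a finite `A₀`-module: it is spanned by `1` and the odd
components of a finite set of algebra generators, because a product of two odd elements is even.
By Artin–Tate for `K ⊆ A₀ ⊆ A`, the ring `A₀` is a finitely generated `K`-algebra; being integral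
over `B₀ = B ∩ A₀`, it is then a finite `B₀`-module, so `A` is finite over `B₀`, and a fortiori
over `B`. Artin–Tate for `K ⊆ B₀ ⊆ A` makes `B₀` a noetherian finitely generated `K`-algebra, and
`B`, a `B₀`-submodule of the finite `B₀`-module `A`, is then finite over `B₀`, hence of finite
type over `K`.
-/

open Polynomial

instance Subalgebra.center.instAlgebra {K A : Type*} [CommRing K] [Ring A] [Algebra K A] :
    Algebra (Subalgebra.center K A) A where
  algebraMap := (Subalgebra.center K A).val.toRingHom
  commutes' r x := (Subalgebra.mem_center_iff.1 r.2 x).symm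
  smul_def' _ _ := rfl

/-- The Artin–Tate lemma, for a not necessarily commutative top ring `C`. -/
theorem Algebra.FiniteType.of_finite_of_injective {R S C : Type*} [CommRing R] [CommRing S]
    [Ring C] [Algebra R S] [Algebra S C] [Algebra R C] [IsScalarTower R S C] [IsNoetherianRing R]
    [Algebra.FiniteType R C] [Module.Finite S C] (h : Function.Injective (algebraMap S C)) :
    Algebra.FiniteType R S := by
  obtain ⟨S₀, hS₀, hS₀C⟩ := exists_subalgebra_of_fg R S C Algebra.FiniteType.out
    Module.Finite.fg_top
  have : IsNoetherianRing S₀ := isNoetherianRing_of_fg hS₀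
  have : Module.Finite S₀ C := ⟨hS₀C⟩
  have : Module.Finite S₀ S :=
    .of_injective (IsScalarTower.toAlgHom S₀ S C).toLinearMap h
  exact .trans (S := S₀) ⟨S₀.fg_top.2 hS₀⟩ inferInstance

theorem Set.mem_center_of_commute_homogeneous {ι σ A : Type*} [DecidableEq ι] [Semiring A]
    [SetLike σ A] [AddSubmonoidClass σ A] (𝒜 : ι → σ) [DirectSum.Decomposition 𝒜] {a : A}
    (h : ∀ i, ∀ b ∈ 𝒜 i, a * b = b * a) : a ∈ Set.center A := by
  refine Semigroup.mem_center_iff.2 fun b => ?_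
  induction b using DirectSum.Decomposition.inductionOn 𝒜 with
  | zero => simp
  | homogeneous b => exact (h _ b b.2).symm
  | add b c hb hc => rw [add_mul, mul_add, hb, hc]

theorem Module.Finite.of_grade_zero_subset_range {σ R A : Type*} [CommRing R] [Ring A]
    [Algebra R A] [Algebra.FiniteType R A] [SetLike σ A] [AddSubmonoidClass σ A]
    (𝒜 : ZMod 2 → σ) [GradedRing 𝒜]
    (h : (𝒜 0 : Set A) ⊆ Set.range (algebraMap R A)) : Module.Finite R A := by
  classical
  obtain ⟨s, hs⟩ := Algebra.FiniteType.out (R := R) (A := A)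
  set T : Finset A := insert 1 (s.image fun x => (DirectSum.decompose 𝒜 x 1 : A))
  have one_mem : (1 : A) ∈ Submodule.span R (T : Set A) :=
    Submodule.subset_span (Finset.mem_insert_self _ _)
  have even_mem (a : A) (ha : a ∈ 𝒜 0) : a ∈ Submodule.span R (T : Set A) := by
    obtain ⟨r, rfl⟩ := h ha
    rw [Algebra.algebraMap_eq_smul_one]
    exact Submodule.smul_mem _ r one_mem
  have one_or_odd : ∀ t ∈ T, t = 1 ∨ t ∈ 𝒜 1 := by
    simp only [T, Finset.mem_insert, Finset.mem_image]
    rintro t (rfl | ⟨x, -, rfl⟩)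
    exacts [Or.inl rfl, Or.inr (SetLike.coe_mem _)]
  have mul_le : Submodule.span R (T : Set A) * Submodule.span R T ≤ Submodule.span R T := by
    rw [Submodule.span_mul_span, Submodule.span_le]
    rintro _ ⟨t, ht, u, hu, rfl⟩
    rcases one_or_odd t ht with rfl | ht1
    · simpa using Submodule.subset_span hu
    rcases one_or_odd u hu with rfl | hu1
    · simpa using Submodule.subset_span ht
    exact even_mem _ (SetLike.mul_mem_graded ht1 hu1)
  let P := (Submodule.span R (T : Set A)).toSubalgebra one_mem
    fun x y hx hy => mul_le (Submodule.mul_mem_mul hx hy)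
  have gen_le : Algebra.adjoin R (s : Set A) ≤ P := by
    refine Algebra.adjoin_le fun x hx => ?_
    rw [← DirectSum.sum_support_decompose 𝒜 x]
    refine Submodule.sum_mem _ fun i _ => ?_
    fin_cases i
    · exact even_mem _ (SetLike.coe_mem _)
    · exact Submodule.subset_span (Finset.mem_insert_of_mem (Finset.mem_image_of_mem _ hx))
  exact ⟨⟨T, eq_top_iff.2 fun x _ => gen_le (hs ▸ Algebra.mem_top)⟩⟩

theorem IsIntegral.of_monic_of_coeff_mem_range {R A : Type*} [CommRing R] [Ring A]
    [Algebra R A] {p : A[X]} (hp : p.Monic) (hcoeff : ∀ k, p.coeff k ∈ Set.range (algebraMap R A))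
    {a : A} (ha : p.eval a = 0) : IsIntegral R a := by
  obtain ⟨q, hq, -, hqm⟩ :=
    lifts_and_natDegree_eq_and_monic ((lifts_iff_coeff_lifts p).2 hcoeff) hp
  exact ⟨q, hqm, by rw [← eval_map, hq, ha]⟩

/-- The degree-zero part, taken inside the center so that it is a commutative ring. -/
def centerGradeZero {ι σ K A : Type*} [AddMonoid ι] [CommRing K] [Ring A] [Algebra K A]
    [SetLike σ A] [AddSubmonoidClass σ A] (𝒜 : ι → σ) [SetLike.GradedMonoid 𝒜]
    (h : ∀ k : K, algebraMap K A k ∈ 𝒜 0) : Subalgebra K (Subalgebra.center K A) where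
  carrier := {z | (z : A) ∈ 𝒜 0}
  mul_mem' {a b} (ha : (a : A) ∈ 𝒜 0) (hb : (b : A) ∈ 𝒜 0) := by
    simpa using SetLike.mul_mem_graded ha hb
  one_mem' := SetLike.one_mem_graded 𝒜
  add_mem' {a b} (ha : (a : A) ∈ 𝒜 0) (hb : (b : A) ∈ 𝒜 0) := add_mem ha hb
  zero_mem' := zero_mem (𝒜 0)
  algebraMap_mem' := h

theorem Subalgebra.finite_and_fg_of_algebraMap_mem {K R A : Type*} [CommRing K] [CommRing R]
    [Ring A] [Algebra K R] [Algebra K A] [Algebra R A] [IsScalarTower K R A] [IsNoetherianRing K]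
    [Algebra.FiniteType K R] [Module.Finite R A] (B : Subalgebra K A)
    (hB : ∀ r, algebraMap R A r ∈ B) : Module.Finite B A ∧ B.FG := by
  have : IsNoetherianRing R := Algebra.FiniteType.isNoetherianRing K R
  let _ : Algebra R B := ((algebraMap R A).codRestrict B hB).toAlgebra' fun r b =>
    Subtype.ext (Algebra.commutes r (b : A))
  have : IsScalarTower R B A := ⟨fun r b a => by
    show algebraMap R A r * b * a = r • (b * a)
    rw [Algebra.smul_def, mul_assoc]⟩
  have : IsScalarTower K R B :=
    .of_algebraMap_eq fun k => Subtype.ext (IsScalarTower.algebraMap_apply K R A k)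
  have : Module.Finite R B :=
    .of_injective (⟨⟨Subtype.val, fun _ _ => rfl⟩, fun r b => (Algebra.smul_def r (b : A)).symm⟩ :
      B →ₗ[R] A) Subtype.val_injective
  exact ⟨.of_restrictScalars_finite R B A,
    B.fg_top.1 (Algebra.FiniteType.trans (S := R) inferInstance inferInstance).out⟩

theorem module_finite_and_fg_of_even_integral_general
    {K A : Type*} [Field K] [Ring A] [Algebra K A]
    (𝒜 : ZMod 2 → AddSubgroup A) [GradedRing 𝒜]
    (hsuper : ∀ (i j : ZMod 2), ∀ a ∈ 𝒜 i, ∀ b ∈ 𝒜 j,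
      a * b = ((-1 : ℤ) ^ ((i * j).val)) • (b * a))
    (hKsub : ∀ (k : K) (i : ZMod 2), ∀ a ∈ 𝒜 i, k • a ∈ 𝒜 i)
    [Algebra.FiniteType K A]
    (B : Subalgebra K A)
    (hint : ∀ a ∈ 𝒜 0, ∃ p : Polynomial A, p.Monic ∧
      (∀ k : ℕ, p.coeff k ∈ B ∧ p.coeff k ∈ 𝒜 0) ∧ p.eval a = 0) :
    Module.Finite B A ∧ B.FG := by
  have halg (k : K) : algebraMap K A k ∈ 𝒜 0 := by
    rw [Algebra.algebraMap_eq_smul_one]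
    exact hKsub k 0 1 (SetLike.one_mem_graded 𝒜)
  have hcentral (a : A) (ha : a ∈ 𝒜 0) : a ∈ Set.center A :=
    Set.mem_center_of_commute_homogeneous 𝒜 fun i b hb => by simpa using hsuper 0 i a ha b hb
  let E := centerGradeZero 𝒜 halg
  let B₀ : Subalgebra K E := B.comap ((Subalgebra.center K A).val.comp E.val)
  have hEA : Function.Injective (algebraMap E A) := Subtype.val_injective.comp Subtype.val_injective
  have : Algebra.FiniteType E A := .of_restrictScalars_finiteType K E A
  have : Module.Finite E A :=
    .of_grade_zero_subset_range 𝒜 fun a ha => ⟨⟨⟨a, hcentral a ha⟩, ha⟩, rfl⟩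
  have : Algebra.FiniteType K E := .of_finite_of_injective hEA
  have hintegral : Algebra.IsIntegral B₀ E := ⟨fun x => by
    obtain ⟨p, hp, hcoeff, hpx⟩ := hint x x.2
    refine (isIntegral_algHom_iff (IsScalarTower.toAlgHom B₀ E A) hEA).1 ?_
    refine .of_monic_of_coeff_mem_range hp (fun k => ?_) hpx
    obtain ⟨hB, h0⟩ := hcoeff k
    exact ⟨⟨⟨⟨_, hcentral _ h0⟩, h0⟩, hB⟩, rfl⟩⟩
  have hfinType : Algebra.FiniteType B₀ E := .of_restrictScalars_finiteType K B₀ E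
  -- instances passed explicitly: unifying them through the nested subalgebras times out
  have : Module.Finite B₀ E := @Algebra.IsIntegral.finite B₀ E _ _ _ hintegral hfinType
  have : Module.Finite B₀ A := .trans E A
  have hB₀A : Function.Injective (algebraMap B₀ A) := hEA.comp Subtype.val_injective
  have : Algebra.FiniteType K B₀ := .of_finite_of_injective (S := B₀) (C := A) hB₀A
  exact B.finite_and_fg_of_algebraMap_mem (R := B₀) fun b => b.2

/-- Let `K` be a field and `A` a commutative superalgebra which is a
finitely generated `K`-algebra whose grading consists of `K`-submodules, and let
`B ⊆ A` be a graded `K`-subalgebra.  If every even element of `A` is integral over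
`B₀ = B ∩ 𝒜 0`, then `A` is a finitely generated `B`-module and `B` is a finitely
generated `K`-algebra. -/
theorem module_finite_and_fg_of_even_integral
    {K A : Type*} [Field K] [Ring A] [Algebra K A]
    (𝒜 : ZMod 2 → AddSubgroup A) [GradedRing 𝒜]
    (hsuper : ∀ (i j : ZMod 2), ∀ a ∈ 𝒜 i, ∀ b ∈ 𝒜 j,
      a * b = ((-1 : ℤ) ^ ((i * j).val)) • (b * a))
    (hodd : ∀ a ∈ 𝒜 1, a * a = 0)
    (hKsub : ∀ (k : K) (i : ZMod 2), ∀ a ∈ 𝒜 i, k • a ∈ 𝒜 i)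
    [Algebra.FiniteType K A]
    (B : Subalgebra K A)
    (hgraded : ∀ b ∈ B, ∃ b₀ b₁ : A, b₀ ∈ B ∧ b₀ ∈ 𝒜 0 ∧ b₁ ∈ B ∧ b₁ ∈ 𝒜 1 ∧
      b = b₀ + b₁)
    (hint : ∀ a ∈ 𝒜 0, ∃ p : Polynomial A, p.Monic ∧
      (∀ k : ℕ, p.coeff k ∈ B ∧ p.coeff k ∈ 𝒜 0) ∧ p.eval a = 0) :
    Module.Finite B A ∧ B.FG :=
  module_finite_and_fg_of_even_integral_general 𝒜 hsuper hKsub B hint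
end

section
/- Let A be a commutative superalgebra and φ : A → A an odd right superderivation with φ ∘ φ = 0, and let R = ker φ (a subring of A). If z ∈ 𝒜 1 is an odd element with φ(z) = 1, then every element a ∈ A can be written uniquely in the form a = r + s·z with r, s ∈ R; that is, A is a free R-module with basis {1, z} (a free R-supermodule of rank 2). -/
/-! Since `z` is odd, the Leibniz rule gives `φ (s * z) = s - φ s * z`. Hence every `a` splits as
`a = (a - φ a * z) + φ a * z` with both coefficients in `ker φ` (using `φ ∘ φ = 0`), and applying
`φ` to any decomposition `a = r + s * z` over `ker φ` recovers `s = φ a`, whence also `r`. -/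

section

variable {A : Type*} [Ring A] {φ : A →+ A} {z : A}

theorem map_mul_of_mem_odd (𝒜 : ZMod 2 → AddSubgroup A)
    (hφmul : ∀ (f₁ : A) (j : ZMod 2), ∀ f₂ ∈ 𝒜 j,
      φ (f₁ * f₂) = f₁ * φ f₂ + ((-1 : ℤ) ^ j.val) • (φ f₁ * f₂))
    (hz : z ∈ 𝒜 1) (s : A) : φ (s * z) = s * φ z - φ s * z := by
  simpa [ZMod.val_one, sub_eq_add_neg] using hφmul s 1 z hz

theorem map_sub_map_mul_eq_zero (hφφ : ∀ a : A, φ (φ a) = 0)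
    (hφz : ∀ s, φ (s * z) = s - φ s * z) (a : A) : φ (a - φ a * z) = 0 := by
  rw [map_sub, hφz, hφφ, zero_mul, sub_zero, sub_self]

theorem map_eq_of_eq_add_mul (hφz : ∀ s, φ (s * z) = s - φ s * z) {a r s : A}
    (hr : φ r = 0) (hs : φ s = 0) (ha : a = r + s * z) : φ a = s := by
  rw [ha, map_add, hr, hφz, hs, zero_mul, sub_zero, zero_add]

end

theorem free_of_rank_two_over_kernel_of_superderivation_general
    {A : Type*} [Ring A] (𝒜 : ZMod 2 → AddSubgroup A)
    (φ : A →+ A)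
    (hφmul : ∀ (f₁ : A) (j : ZMod 2), ∀ f₂ ∈ 𝒜 j,
      φ (f₁ * f₂) = f₁ * φ f₂ + ((-1 : ℤ) ^ j.val) • (φ f₁ * f₂))
    (hφφ : ∀ a : A, φ (φ a) = 0)
    (z : A) (hz : z ∈ 𝒜 1) (hφz : φ z = 1) :
    ∀ a : A, ∃! rs : A × A, φ rs.1 = 0 ∧ φ rs.2 = 0 ∧ a = rs.1 + rs.2 * z := by
  have hφz' : ∀ s, φ (s * z) = s - φ s * z := fun s => by
    rw [map_mul_of_mem_odd 𝒜 hφmul hz, hφz, mul_one]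
  intro a
  refine ⟨(a - φ a * z, φ a),
    ⟨map_sub_map_mul_eq_zero hφφ hφz' a, hφφ a, (sub_add_cancel _ _).symm⟩, ?_⟩
  rintro ⟨r, s⟩ ⟨hr, hs, ha⟩
  obtain rfl : φ a = s := map_eq_of_eq_add_mul hφz' hr hs ha
  exact Prod.ext (eq_sub_of_add_eq ha.symm) rfl

/-- Let `A` be a commutative superalgebra and `φ : A → A` an odd right
superderivation with `φ ∘ φ = 0`, and let `R = ker φ`.  If `z` is an odd element with
`φ(z) = 1`, then every `a ∈ A` can be written uniquely as `a = r + s * z` with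
`r, s ∈ R`; i.e. `A` is a free `R`-module with basis `{1, z}`. -/
theorem free_of_rank_two_over_kernel_of_superderivation
    {A : Type*} [Ring A] (𝒜 : ZMod 2 → AddSubgroup A) [GradedRing 𝒜]
    (hsuper : ∀ (i j : ZMod 2), ∀ a ∈ 𝒜 i, ∀ b ∈ 𝒜 j,
      a * b = ((-1 : ℤ) ^ ((i * j).val)) • (b * a))
    (hodd : ∀ a ∈ 𝒜 1, a * a = 0)
    (φ : A →+ A)
    (hφdeg : ∀ i : ZMod 2, ∀ a ∈ 𝒜 i, φ a ∈ 𝒜 (i + 1))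
    (hφmul : ∀ (f₁ : A) (j : ZMod 2), ∀ f₂ ∈ 𝒜 j,
      φ (f₁ * f₂) = f₁ * φ f₂ + ((-1 : ℤ) ^ j.val) • (φ f₁ * f₂))
    (hφφ : ∀ a : A, φ (φ a) = 0)
    (z : A) (hz : z ∈ 𝒜 1) (hφz : φ z = 1) :
    ∀ a : A, ∃! rs : A × A, φ rs.1 = 0 ∧ φ rs.2 = 0 ∧ a = rs.1 + rs.2 * z :=
  free_of_rank_two_over_kernel_of_superderivation_general 𝒜 φ hφmul hφφ z hz hφz
end

section
/- Let K be a field of characteristic 0, let V be a nonzero finite-dimensional K-vector space, and let L be a finite subset of linear endomorphisms of V such that x∘y = −(y∘x) for all x, y ∈ L (in particular every x ∈ L satisfies x∘x = 0). Then there exists a nonzero vector v ∈ V with x(v) = 0 for every x ∈ L. -/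
/-!
If `a` anticommutes with every `x ∈ s`, then `a` maps the common kernel of `s` into itself, and
anticommuting with itself forces `a ∘ a = 0` when there is no `2`-torsion. So for a nonzero
common kernel vector `v` of `s`, either `a v = 0` or `a v` is a nonzero common kernel vector of
`insert a s`; induction on the finite set `L` concludes.
-/

namespace LinearMap

variable {R M : Type*} [Semiring R] [AddCommGroup M] [Module R M]

theorem comp_self_eq_zero_of_eq_neg [IsAddTorsionFree M] {a : M →ₗ[R] M}
    (h : a ∘ₗ a = -(a ∘ₗ a)) : a ∘ₗ a = 0 :=
  ext fun v => self_eq_neg.mp (DFunLike.congr_fun h v)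

theorem apply_apply_eq_zero_of_comp_eq_neg {a x : M →ₗ[R] M} (h : x ∘ₗ a = -(a ∘ₗ x)) {v : M}
    (hv : x v = 0) : x (a v) = 0 := by
  simpa [hv] using DFunLike.congr_fun h v

theorem exists_ne_zero_forall_mem_insert_apply_eq_zero {a : M →ₗ[R] M} {s : Set (M →ₗ[R] M)}
    (ha : a ∘ₗ a = 0) (hs : ∀ x ∈ s, x ∘ₗ a = -(a ∘ₗ x)) {v : M} (hv : v ≠ 0)
    (hvs : ∀ x ∈ s, x v = 0) : ∃ w : M, w ≠ 0 ∧ ∀ x ∈ insert a s, x w = 0 := by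
  by_cases hav : a v = 0
  · exact ⟨v, hv, Set.forall_mem_insert.mpr ⟨hav, hvs⟩⟩
  · refine ⟨a v, hav, Set.forall_mem_insert.mpr ⟨DFunLike.congr_fun ha v, fun x hx => ?_⟩⟩
    exact apply_apply_eq_zero_of_comp_eq_neg (hs x hx) (hvs x hx)

theorem exists_ne_zero_forall_apply_eq_zero_of_anticomm [Nontrivial M] [IsAddTorsionFree M]
    {L : Set (M →ₗ[R] M)} (hL : L.Finite) (hanti : ∀ x ∈ L, ∀ y ∈ L, x ∘ₗ y = -(y ∘ₗ x)) :
    ∃ v : M, v ≠ 0 ∧ ∀ x ∈ L, x v = 0 := by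
  refine hL.induction_on_subset (motive := fun s _ => ∃ v : M, v ≠ 0 ∧ ∀ x ∈ s, x v = 0) L
    ?_ fun {a s} haL hsL _ ⟨v, hv, hvs⟩ => ?_
  · obtain ⟨v, hv⟩ := exists_ne (0 : M)
    exact ⟨v, hv, by simp⟩
  · exact exists_ne_zero_forall_mem_insert_apply_eq_zero
      (comp_self_eq_zero_of_eq_neg (hanti a haL a haL))
      (fun x hx => hanti x (hsL hx) a haL) hv hvs

end LinearMap

theorem exists_nonzero_common_kernel_of_anticommuting_general
    {K V : Type*} [Field K] [CharZero K] [AddCommGroup V] [Module K V]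
    (hV : Nontrivial V)
    (L : Set (V →ₗ[K] V)) (hLfin : L.Finite)
    (hanti : ∀ x ∈ L, ∀ y ∈ L, x ∘ₗ y = -(y ∘ₗ x)) :
    ∃ v : V, v ≠ 0 ∧ ∀ x ∈ L, x v = 0 :=
  have : IsAddTorsionFree V := .of_isTorsionFree K V
  LinearMap.exists_ne_zero_forall_apply_eq_zero_of_anticomm hLfin hanti

/-- Let `K` be a field of characteristic `0`, `V` a nonzero
finite-dimensional `K`-vector space, and `L` a finite set of linear endomorphisms of `V`
which pairwise anticommute (`x ∘ y = -(y ∘ x)` for all `x, y ∈ L`).  Then there is a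
nonzero vector `v ∈ V` annihilated by every element of `L`. -/
theorem exists_nonzero_common_kernel_of_anticommuting
    {K V : Type*} [Field K] [CharZero K] [AddCommGroup V] [Module K V]
    [FiniteDimensional K V] (hV : Nontrivial V)
    (L : Set (V →ₗ[K] V)) (hLfin : L.Finite)
    (hanti : ∀ x ∈ L, ∀ y ∈ L, x ∘ₗ y = -(y ∘ₗ x)) :
    ∃ v : V, v ≠ 0 ∧ ∀ x ∈ L, x v = 0 :=
  exists_nonzero_common_kernel_of_anticommuting_general hV L hLfin hanti
end

section
/- Let K be a field of characteristic 0, A = K[x][ε] the dual numbers over the polynomial ring K[x] (so ε² = 0), and R = {c + q·ε : c ∈ K, q ∈ K[x]} the K-subalgebra of A. Then R is not finitely generated as a K-algebra. -/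
/-!
If `a` and `b` in `K[x][ε]` have constant first components `c` and `d`, then the `ε`-part of
`a * b` is `c • snd b + d • snd a`. So the elements of `K + K[x]ε` generated by a finite set `s`
all have `ε`-part in the finite-dimensional `K`-span of the `ε`-parts of `s`, whereas `K + K[x]ε`
contains `ε q` for every polynomial `q`.
-/

open Polynomial TrivSqZeroExt

namespace TrivSqZeroExt

variable {S R M : Type*} [CommSemiring S] [Semiring R] [AddCommMonoid M]
  [Algebra S R] [Module S M] [Module R M] [Module Rᵐᵒᵖ M] [SMulCommClass R Rᵐᵒᵖ M]
  [IsScalarTower S R M] [IsScalarTower S Rᵐᵒᵖ M]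

variable (S) in
def scalarFstSubalgebra (V : Submodule S M) : Subalgebra S (TrivSqZeroExt R M) where
  carrier := {a | a.fst ∈ Set.range (algebraMap S R) ∧ a.snd ∈ V}
  mul_mem' := by
    rintro x y ⟨⟨c, hc⟩, hx⟩ ⟨⟨d, hd⟩, hy⟩
    refine ⟨⟨c * d, by simp [hc, hd]⟩, ?_⟩
    rw [snd_mul, ← hc, ← hd, algebraMap_smul, ← MulOpposite.algebraMap_apply, algebraMap_smul]
    exact V.add_mem (V.smul_mem c hy) (V.smul_mem d hx)
  add_mem' := by
    rintro x y ⟨⟨c, hc⟩, hx⟩ ⟨⟨d, hd⟩, hy⟩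
    exact ⟨⟨c + d, by simp [hc, hd]⟩, V.add_mem hx hy⟩
  algebraMap_mem' c := ⟨⟨c, rfl⟩, V.zero_mem⟩

theorem snd_mem_span_of_mem_adjoin {s : Set (TrivSqZeroExt R M)}
    (hs : ∀ x ∈ s, x.fst ∈ Set.range (algebraMap S R)) {a : TrivSqZeroExt R M}
    (ha : a ∈ Algebra.adjoin S s) : a.snd ∈ Submodule.span S (snd '' s) := by
  refine (Algebra.adjoin_le (S := scalarFstSubalgebra S (Submodule.span S (snd '' s))) ?_ ha).2
  exact fun x hx => ⟨hs x hx, Submodule.subset_span ⟨x, hx, rfl⟩⟩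

theorem finite_of_fg_of_inr_mem {A : Subalgebra S (TrivSqZeroExt R M)} (hA : A.FG)
    (hfst : ∀ a ∈ A, a.fst ∈ Set.range (algebraMap S R)) (hinr : ∀ m : M, inr m ∈ A) :
    Module.Finite S M := by
  classical
  obtain ⟨s, rfl⟩ := hA
  refine ⟨⟨s.image snd, eq_top_iff.2 fun m _ => ?_⟩⟩
  rw [Finset.coe_image]
  simpa using snd_mem_span_of_mem_adjoin (fun x hx => hfst x (Algebra.subset_adjoin hx)) (hinr m)

end TrivSqZeroExt

theorem invariants_not_finitely_generated_general
    (K : Type*) [Field K]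
    (R : Subalgebra K (DualNumber (Polynomial K)))
    (hR : ∀ a : DualNumber (Polynomial K),
      a ∈ R ↔ ∃ (c : K) (q : Polynomial K), a = inl (C c) + inr q) :
    ¬ R.FG := by
  intro hfg
  refine Polynomial.not_finite (TrivSqZeroExt.finite_of_fg_of_inr_mem hfg ?_ ?_)
  · intro a ha
    obtain ⟨c, q, rfl⟩ := (hR a).1 ha
    exact ⟨c, by simp⟩
  · exact fun q => (hR _).2 ⟨0, q, by simp⟩

/-- Let `K` be a field of characteristic `0`, `A = K[x][ε]` the dual
numbers over the polynomial ring, and `R = {c + q·ε : c ∈ K, q ∈ K[x]}` the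
`K`-subalgebra of `A`.  Then `R` is not finitely generated as a `K`-algebra. -/
theorem invariants_not_finitely_generated
    (K : Type*) [Field K] [CharZero K]
    (R : Subalgebra K (DualNumber (Polynomial K)))
    (hR : ∀ a : DualNumber (Polynomial K),
      a ∈ R ↔ ∃ (c : K) (q : Polynomial K), a = inl (C c) + inr q) :
    ¬ R.FG :=
  invariants_not_finitely_generated_general K R hR
end

section
/- Let K be a field of characteristic 0, A = K[x][ε] the dual numbers over the polynomial ring K[x] (so ε² = 0), and R = {c + q·ε : c ∈ K, q ∈ K[x]} the K-subalgebra of A. Then A is not finitely generated as an R-module. -/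
/-!
Projecting `A = K[x][ε]` onto its `ε`-free part `K[x]` is a surjective `K`-algebra map which sends
every element of `R` to a constant. A finite generating set of `A` over `R` therefore projects to a
finite spanning set of `K[x]` over `K`, which cannot exist.
-/

open Polynomial TrivSqZeroExt

theorem Module.Finite.of_surjective_of_map_le_bot {K A P : Type*} [CommSemiring K] [Semiring A]
    [Semiring P] [Algebra K A] [Algebra K P] (R : Subalgebra K A) (f : A →ₐ[K] P)
    (hf : Function.Surjective f) (hR : R.map f ≤ ⊥) [Module.Finite R A] : Module.Finite K P := by
  classical
  obtain ⟨s, hs⟩ := Module.Finite.fg_top (R := R) (M := A)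
  let N := Submodule.span K (f '' s)
  let N' : Submodule R A :=
    { carrier := {a | f a ∈ N}
      add_mem' := fun ha hb => by simpa using N.add_mem ha hb
      zero_mem' := by simp
      smul_mem' := fun r a ha => by
        obtain ⟨c, hc⟩ := Algebra.mem_bot.mp (hR ⟨r, r.2, rfl⟩)
        change f (r * a) ∈ N
        rw [map_mul, show f r = algebraMap K P c from hc.symm, ← Algebra.smul_def]
        exact N.smul_mem c ha }
  have hN' : N' = ⊤ := top_le_iff.mp <| hs ▸ Submodule.span_le.mpr fun a ha =>
    Submodule.subset_span ⟨a, ha, rfl⟩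
  refine ⟨⟨s.image f, ?_⟩⟩
  rw [Finset.coe_image, Submodule.eq_top_iff']
  intro p
  obtain ⟨a, rfl⟩ := hf p
  exact (hN' ▸ Submodule.mem_top : a ∈ N')

theorem dualNumbers_not_module_finite_over_invariants_general
    (K : Type*) [Field K]
    (R : Subalgebra K (DualNumber (Polynomial K)))
    (hR : ∀ a : DualNumber (Polynomial K),
      a ∈ R ↔ ∃ (c : K) (q : Polynomial K), a = inl (C c) + inr q) :
    ¬ Module.Finite R (DualNumber (Polynomial K)) := by
  intro hfin
  have hconst : R.map (fstHom K K[X] K[X]) ≤ ⊥ := by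
    rintro _ ⟨a, ha, rfl⟩
    obtain ⟨c, q, rfl⟩ := (hR a).mp ha
    exact Algebra.mem_bot.mpr ⟨c, by simp⟩
  exact Polynomial.not_finite <|
    Module.Finite.of_surjective_of_map_le_bot R _ (fun p => ⟨inl p, rfl⟩) hconst

/-- Let `K` be a field of characteristic `0`, `A = K[x][ε]` the dual
numbers over the polynomial ring, and `R = {c + q·ε : c ∈ K, q ∈ K[x]}` the
`K`-subalgebra of `A`.  Then `A` is not finitely generated as an `R`-module. -/
theorem dualNumbers_not_module_finite_over_invariants
    (K : Type*) [Field K] [CharZero K]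
    (R : Subalgebra K (DualNumber (Polynomial K)))
    (hR : ∀ a : DualNumber (Polynomial K),
      a ∈ R ↔ ∃ (c : K) (q : Polynomial K), a = inl (C c) + inr q) :
    ¬ Module.Finite R (DualNumber (Polynomial K)) :=
  dualNumbers_not_module_finite_over_invariants_general K R hR
end

section
/- Let K be a field of characteristic 0, A = K[x][ε] the dual numbers over the polynomial ring K[x] (so ε² = 0), and R = {c + q·ε : c ∈ K, q ∈ K[x]} the K-subalgebra of A. Then the element x ∈ A is not integral over R; in particular A is not an integral extension of R. -/
/-! The first-coordinate projection `A → K[x]` maps `R` into the constants `K`, so applying it to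
a monic equation of `x` over `R` yields a monic equation of `X` over `K`; but `X` is
transcendental over `K`. -/

open Polynomial TrivSqZeroExt

theorem Subalgebra.isIntegral_map_of_map_le_bot {K A : Type*} [CommRing K] [CommRing A]
    [Algebra K A] {R : Subalgebra K A} (f : A →ₐ[K] K[X]) (hR : R.map f ≤ ⊥) {a : A}
    (ha : IsIntegral R a) : IsIntegral K (f a) := by
  refine ha.map_of_comp_eq (constantCoeff.comp (f.comp R.val).toRingHom) f.toRingHom ?_
  ext1 r
  obtain ⟨c, hc⟩ : f r ∈ Set.range (algebraMap K K[X]) :=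
    Algebra.mem_bot.1 (hR (mem_map.2 ⟨r, r.2, rfl⟩))
  simp [← hc]

theorem x_not_integral_over_invariants_general
    (K : Type*) [Field K]
    (R : Subalgebra K (DualNumber (Polynomial K)))
    (hR : ∀ a : DualNumber (Polynomial K),
      a ∈ R ↔ ∃ (c : K) (q : Polynomial K), a = inl (C c) + inr q) :
    ¬ IsIntegral R (inl (X : Polynomial K) : DualNumber (Polynomial K)) ∧
      ¬ Algebra.IsIntegral R (DualNumber (Polynomial K)) := by
  let fst : DualNumber K[X] →ₐ[K] K[X] := fstHom K K[X] K[X]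
  have hfst : R.map fst ≤ ⊥ := by
    rintro _ ⟨a, ha, rfl⟩
    obtain ⟨c, q, rfl⟩ := (hR a).1 ha
    exact Algebra.mem_bot.2 ⟨c, by simp [fst]⟩
  have hX : ¬ IsIntegral R (inl (X : K[X]) : DualNumber K[X]) := fun h =>
    transcendental_X K (Subalgebra.isIntegral_map_of_map_le_bot fst hfst h).isAlgebraic
  exact ⟨hX, fun h => hX (h.isIntegral _)⟩

/-- Let `K` be a field of characteristic `0`, `A = K[x][ε]` the dual
numbers over the polynomial ring, and `R = {c + q·ε : c ∈ K, q ∈ K[x]}` the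
`K`-subalgebra of `A`.  Then the element `x ∈ A` is not integral over `R`; in
particular `A` is not an integral extension of `R`. -/
theorem x_not_integral_over_invariants
    (K : Type*) [Field K] [CharZero K]
    (R : Subalgebra K (DualNumber (Polynomial K)))
    (hR : ∀ a : DualNumber (Polynomial K),
      a ∈ R ↔ ∃ (c : K) (q : Polynomial K), a = inl (C c) + inr q) :
    ¬ IsIntegral R (inl (X : Polynomial K) : DualNumber (Polynomial K)) ∧
      ¬ Algebra.IsIntegral R (DualNumber (Polynomial K)) :=
  x_not_integral_over_invariants_general K R hR
end

section
/- Let A be a commutative superalgebra and let M be a ZMod 2-graded A-module, i.e. M = M₀ ⊕ M₁ with 𝒜 i • M_j ⊆ M_{i+j}. Then M is finitely presented as an (ungraded) A-module if and only if there exist n ≥ 0, a finite free graded A-module F with a homogeneous basis consisting of n even and n odd elements, and a surjective grading-preserving A-linear map ψ : F → M whose kernel is a finitely generated A-module. -/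
/-!
Splitting each generator of a finitely generated graded module into its even and odd parts gives
finitely many homogeneous generators, `n` even and `n` odd; the induced map from `A^{n|n}` is then
grading-preserving and surjective, and its kernel is finitely generated exactly when `M` is
finitely presented.
-/

theorem DirectSum.IsInternal.exists_add_eq_of_zmod_two {M : Type*} [AddCommGroup M]
    {ℳ : ZMod 2 → AddSubgroup M} (h : DirectSum.IsInternal ℳ) (m : M) :
    ∃ a ∈ ℳ 0, ∃ b ∈ ℳ 1, a + b = m := by
  obtain ⟨x, rfl⟩ := h.surjective m
  refine ⟨x 0, (x 0).2, x 1, (x 1).2, ?_⟩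
  conv_rhs => rw [← DirectSum.sum_univ_of x]
  simp only [map_sum, DirectSum.coeAddMonoidHom_of]
  exact (Fin.sum_univ_two fun i => (x i : M)).symm

theorem sum_smul_mem_of_mem {ι G A M : Type*} [Fintype ι] [AddGroup G] [Ring A]
    [AddCommGroup M] [Module A M] {𝒜 : G → AddSubgroup A} {ℳ : G → AddSubgroup M}
    (hsmul : ∀ i j, ∀ a ∈ 𝒜 i, ∀ m ∈ ℳ j, a • m ∈ ℳ (i + j))
    {g : ι → M} {d : ι → G} (hg : ∀ k, g k ∈ ℳ (d k)) {j : G} {v : ι → A}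
    (hv : ∀ k, v k ∈ 𝒜 (j - d k)) :
    ∑ k, v k • g k ∈ ℳ j :=
  AddSubgroup.sum_mem _ fun k _ => sub_add_cancel j (d k) ▸ hsmul _ _ _ (hv k) _ (hg k)

theorem exists_surjective_linearCombination_even_odd {A M : Type*} [Ring A] [AddCommGroup M]
    [Module A M] [Module.Finite A M] {ℳ : ZMod 2 → AddSubgroup M}
    (h : DirectSum.IsInternal ℳ) :
    ∃ (n : ℕ) (e o : Fin n → M), (∀ i, e i ∈ ℳ 0) ∧ (∀ i, o i ∈ ℳ 1) ∧
      Function.Surjective (Fintype.linearCombination A (Sum.elim e o)) := by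
  obtain ⟨n, s, hs⟩ := Module.Finite.exists_fin (R := A) (M := M)
  choose e he o ho hs_eq using fun i => h.exists_add_eq_of_zmod_two (s i)
  refine ⟨n, e, o, he, ho, ?_⟩
  rw [← LinearMap.range_eq_top, Fintype.range_linearCombination, eq_top_iff, ← hs,
    Submodule.span_le]
  rintro _ ⟨i, rfl⟩
  rw [← hs_eq i]
  exact add_mem (Submodule.subset_span ⟨Sum.inl i, rfl⟩)
    (Submodule.subset_span ⟨Sum.inr i, rfl⟩)

theorem supermodule_finitePresentation_iff_general
    {A M : Type*} [Ring A] [AddCommGroup M] [Module A M]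
    (𝒜 : ZMod 2 → AddSubgroup A)
    (ℳ : ZMod 2 → AddSubgroup M)
    (hdecomp : DirectSum.IsInternal ℳ)
    (hsmul : ∀ (i j : ZMod 2), ∀ a ∈ 𝒜 i, ∀ m ∈ ℳ j, a • m ∈ ℳ (i + j)) :
    Module.FinitePresentation A M ↔
      ∃ (n : ℕ) (ψ : ((Fin n ⊕ Fin n) → A) →ₗ[A] M),
        Function.Surjective ψ ∧
        (LinearMap.ker ψ).FG ∧
        (∀ j : ZMod 2, ∀ v : (Fin n ⊕ Fin n) → A,
          (∀ i : Fin n, v (Sum.inl i) ∈ 𝒜 j) →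
          (∀ i : Fin n, v (Sum.inr i) ∈ 𝒜 (j + 1)) →
          ψ v ∈ ℳ j) := by
  constructor
  · intro hfp
    obtain ⟨n, e, o, he, ho, hsurj⟩ :=
      exists_surjective_linearCombination_even_odd (A := A) hdecomp
    refine ⟨n, _, hsurj, Module.FinitePresentation.fg_ker _ hsurj, fun j v hv_even hv_odd => ?_⟩
    rw [Fintype.linearCombination_apply]
    refine sum_smul_mem_of_mem hsmul (d := Sum.elim 0 1) (Sum.forall.2 ⟨he, ho⟩) ?_
    rintro (i | i)
    · simpa using hv_even i
    · simpa [CharTwo.sub_eq_add] using hv_odd i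
  · rintro ⟨n, ψ, hsurj, hker, -⟩
    exact Module.finitePresentation_of_surjective ψ hsurj hker

/-- Let `A` be a commutative superalgebra and `M` a `ZMod 2`-graded
`A`-module (`M = M₀ ⊕ M₁` with `𝒜 i • ℳ j ⊆ ℳ (i+j)`).  Then `M` is finitely presented
as an (ungraded) `A`-module iff there are `n : ℕ`, a finite free graded `A`-module
`F = A^{n|n}` (with standard homogeneous basis of `n` even and `n` odd elements, the
graded piece `F_j` consisting of vectors whose even coordinates lie in `𝒜 j` and odd
coordinates in `𝒜 (j+1)`), and a surjective grading-preserving `A`-linear map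
`ψ : F → M` whose kernel is finitely generated. -/
theorem supermodule_finitePresentation_iff
    {A M : Type*} [Ring A] [AddCommGroup M] [Module A M]
    (𝒜 : ZMod 2 → AddSubgroup A) [GradedRing 𝒜]
    (hsuper : ∀ (i j : ZMod 2), ∀ a ∈ 𝒜 i, ∀ b ∈ 𝒜 j,
      a * b = ((-1 : ℤ) ^ ((i * j).val)) • (b * a))
    (hodd : ∀ a ∈ 𝒜 1, a * a = 0)
    (ℳ : ZMod 2 → AddSubgroup M)
    (hdecomp : DirectSum.IsInternal ℳ)
    (hsmul : ∀ (i j : ZMod 2), ∀ a ∈ 𝒜 i, ∀ m ∈ ℳ j, a • m ∈ ℳ (i + j)) :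
    Module.FinitePresentation A M ↔
      ∃ (n : ℕ) (ψ : ((Fin n ⊕ Fin n) → A) →ₗ[A] M),
        Function.Surjective ψ ∧
        (LinearMap.ker ψ).FG ∧
        (∀ j : ZMod 2, ∀ v : (Fin n ⊕ Fin n) → A,
          (∀ i : Fin n, v (Sum.inl i) ∈ 𝒜 j) →
          (∀ i : Fin n, v (Sum.inr i) ∈ 𝒜 (j + 1)) →
          ψ v ∈ ℳ j) :=
  supermodule_finitePresentation_iff_general 𝒜 ℳ hdecomp hsmul
end
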